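/- arXiv:1504.05102 — 5 statements merged into one kernel-verified Lean document; each statement's English description precedes it below -/
import Mathlib

section
/- Let Γ = (V, E, s, r) be a finite directed graph with a specialization γ, and let W ⊆ V be a nonempty subset. For every arrival path p in W one has sd(p) ≤ |V|. -/
open Classical

/-- `sd p` is the length of the longest special suffix of the path `p`
(given as a list of edges): if `p = e₁⋯eₙ` and `i` is minimal such that the suffix
`e_{i+1}⋯eₙ` is special, then `sd p = n - i`. -/
noncomputable def sd {E : Type*} (special : E → Prop) (p : List E) : ℕ :=
  (p.reverse.takeWhile fun e => decide (special e)).length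

/-!
The longest special suffix `q` of an arrival path is itself an arrival path, and special edges
are determined by their sources. Hence an arrival path made of special edges is determined by
its first edge: after each edge, either its range lies in `W` and the path stops, or the next
edge is the special edge at that range. If two edges of `q` had the same source, the two
suffixes of `q` starting there would be arrival paths with the same first edge but different
lengths. So the sources of the edges of `q` are distinct vertices and `sd p = |q| ≤ |V|`.
-/

namespace DirectedGraph

variable {V E : Type*} (s r : E → V) (W : Set V)

def IsArrivalPath (p : List E) : Prop :=
  p.IsChain (fun e f => r e = s f) ∧ (∀ e ∈ p, s e ∉ W) ∧ ∀ e ∈ p.getLast?, r e ∈ W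

variable {s r W}

theorem IsArrivalPath.of_append_right {p q : List E} (h : IsArrivalPath s r W (p ++ q)) :
    IsArrivalPath s r W q := by
  obtain ⟨hchain, hsrc, hrange⟩ := h
  refine ⟨hchain.right_of_append, fun e he => hsrc e (List.mem_append_right p he),
    fun e he => hrange e ?_⟩
  rw [List.getLast?_append, Option.mem_def.mp he]
  rfl

theorem IsArrivalPath.of_suffix {p q : List E} (hqp : q <:+ p) (h : IsArrivalPath s r W p) :
    IsArrivalPath s r W q := by
  obtain ⟨t, rfl⟩ := hqp
  exact h.of_append_right

theorem IsArrivalPath.tail {e : E} {p : List E} (h : IsArrivalPath s r W (e :: p)) :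
    IsArrivalPath s r W p :=
  IsArrivalPath.of_append_right (p := [e]) h

theorem IsArrivalPath.range_notMem_of_cons_cons {e f : E} {p : List E}
    (h : IsArrivalPath s r W (e :: f :: p)) : r e ∉ W := by
  rw [(List.isChain_cons_cons.mp h.1).1]
  exact h.2.1 f (by simp)

theorem IsArrivalPath.eq_of_cons {S : Set E} (hS : S.InjOn s) {e : E} {p q : List E}
    (hpS : ∀ f ∈ p, f ∈ S) (hqS : ∀ f ∈ q, f ∈ S)
    (hp : IsArrivalPath s r W (e :: p)) (hq : IsArrivalPath s r W (e :: q)) : p = q := by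
  induction p generalizing e q with
  | nil =>
    cases q with
    | nil => rfl
    | cons f q => exact absurd (hp.2.2 e rfl) hq.range_notMem_of_cons_cons
  | cons f p ih =>
    cases q with
    | nil => exact absurd (hq.2.2 e rfl) hp.range_notMem_of_cons_cons
    | cons g q =>
      have hfg : f = g := hS (hpS f (by simp)) (hqS g (by simp))
        ((List.isChain_cons_cons.mp hp.1).1.symm.trans (List.isChain_cons_cons.mp hq.1).1)
      subst hfg
      rw [ih (fun x hx => hpS x (by simp [hx])) (fun x hx => hqS x (by simp [hx]))
        hp.tail hq.tail]

theorem IsArrivalPath.nodup_map_source {S : Set E} (hS : S.InjOn s) {p : List E}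
    (hpS : ∀ e ∈ p, e ∈ S) (hp : IsArrivalPath s r W p) : (p.map s).Nodup := by
  induction p with
  | nil => exact List.nodup_nil
  | cons e p ih =>
    refine List.nodup_cons.mpr ⟨fun hmem => ?_, ih (fun x hx => hpS x (by simp [hx])) hp.tail⟩
    obtain ⟨f, hf, hsf⟩ := List.mem_map.mp hmem
    have hfe : f = e := hS (hpS f (by simp [hf])) (hpS e (by simp)) hsf
    subst hfe
    obtain ⟨t, u, rfl⟩ := List.append_of_mem hf
    have hu : IsArrivalPath s r W (f :: u) := hp.tail.of_append_right
    have hlen := congrArg List.length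
      (hp.eq_of_cons hS (fun x hx => hpS x (by simp [hx])) (fun x hx => hpS x (by simp [hx])) hu)
    simp only [List.length_cons, List.length_append] at hlen
    omega

theorem IsArrivalPath.length_le_card [Fintype V] {S : Set E} (hS : S.InjOn s) {p : List E}
    (hpS : ∀ e ∈ p, e ∈ S) (hp : IsArrivalPath s r W p) : p.length ≤ Fintype.card V := by
  simpa using (hp.nodup_map_source hS hpS).length_le_card

end DirectedGraph

theorem injOn_source_range_of_specialization {V E : Type*} {s : E → V} {P : V → Prop}
    {γ : Subtype P → E} (hγ : ∀ v, s (γ v) = v.1) : (Set.range γ).InjOn s := by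
  rintro _ ⟨u, rfl⟩ _ ⟨u', rfl⟩ hs
  obtain rfl : u = u' := Subtype.ext (by rw [← hγ u, ← hγ u', hs])
  rfl

theorem exists_suffix_forall_length_eq_sd {E : Type*} (special : E → Prop) (p : List E) :
    ∃ q, q <:+ p ∧ (∀ e ∈ q, special e) ∧ q.length = sd special p := by
  refine ⟨(p.reverse.takeWhile fun e => decide (special e)).reverse, ?_, fun e he => ?_, ?_⟩
  · rw [← List.reverse_prefix, List.reverse_reverse]
    exact List.takeWhile_prefix _
  · simpa using List.mem_takeWhile_imp (List.mem_reverse.mp he)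
  · rw [List.length_reverse, sd]

open DirectedGraph in
theorem sd_of_arrival_path_le_card_general
    {V E : Type*} [Fintype V]
    (s r : E → V)
    (γ : {v : V // ∃ e, s e = v} → E)
    (hγ : ∀ v, s (γ v) = v.1)
    (W : Set V)
    (v : V) (p : List E)
    (hchain : p.Chain' (fun e f => r e = s f))
    (hrange : (p.getLast?.map r).getD v ∈ W)
    (harrival : ∀ e ∈ p, s e ∉ W) :
    sd (fun e => ∃ u, γ u = e) p ≤ Fintype.card V := by
  have hp : IsArrivalPath s r W p := by
    refine ⟨hchain, harrival, fun e he => ?_⟩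
    simpa [Option.mem_def.mp he] using hrange
  obtain ⟨q, hqp, hq_special, hq_len⟩ :=
    exists_suffix_forall_length_eq_sd (fun e => ∃ u, γ u = e) p
  rw [← hq_len]
  exact (hp.of_suffix hqp).length_le_card (injOn_source_range_of_specialization hγ) hq_special

/-- In a finite directed graph `(V, E, s, r)` with a specialization `γ`
and a nonempty subset `W ⊆ V`, every arrival path `p` in `W` (a path, given by its
source vertex `v` and list of edges, whose range lies in `W` and none of whose edge
sources lies in `W`) satisfies `sd p ≤ |V|`. -/
theorem sd_of_arrival_path_le_card
    {V E : Type*} [Fintype V] [Fintype E]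
    (s r : E → V)
    (γ : {v : V // ∃ e, s e = v} → E)
    (hγ : ∀ v, s (γ v) = v.1)
    (W : Set V) (hW : W.Nonempty)
    (v : V) (p : List E)
    (hsrc : ∀ h : p ≠ [], s (p.head h) = v)
    (hchain : p.Chain' (fun e f => r e = s f))
    (hrange : (p.getLast?.map r).getD v ∈ W)
    (harrival : ∀ e ∈ p, s e ∉ W) :
    sd (fun e => ∃ u, γ u = e) p ≤ Fintype.card V :=
  sd_of_arrival_path_le_card_general s r γ hγ W v p hchain hrange harrival
end

section
/- Let Γ = (V, E, s, r) be a finite directed graph with V nonempty and frame W₁, …, W_k. Then there exists a specialization γ of Γ such that the set of all special paths p = e₁⋯eₙ with s(e₁), …, s(eₙ) ∉ W₁ ∪ ⋯ ∪ W_k is finite. -/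
/-- `w` is a descendant of `v`: there is a (possibly empty) path from `v` to `w`. -/
def Descendant {V E : Type*} (s r : E → V) : V → V → Prop :=
  Relation.ReflTransGen fun a b => ∃ e, s e = a ∧ r e = b

/-- A nonempty subset `W ⊆ V` is hereditary if all descendants of its vertices lie in `W`. -/
def Hereditary {V E : Type*} (s r : E → V) (W : Set V) : Prop :=
  W.Nonempty ∧ ∀ v ∈ W, ∀ w, Descendant s r v w → w ∈ W

/-- A minimal hereditary subset: hereditary and minimal under inclusion among
hereditary subsets. -/
def MinHereditary {V E : Type*} (s r : E → V) (W : Set V) : Prop :=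
  Hereditary s r W ∧ ∀ U : Set V, Hereditary s r U → U ⊆ W → U = W

/-!
Every vertex has a descendant in the frame: the descendants of a vertex form a hereditary set,
which by finiteness contains a minimal one. So the distance to the frame is defined everywhere,
and every vertex outside the frame has an out-edge that strictly lowers it. Specializing along
such edges, the sources along a special path outside the frame have strictly decreasing distance,
so such a path never repeats an edge and has length at most `|E|`.
-/

namespace Relation

variable {α : Type*} (R : α → α → Prop) (F : Set α)

def reachesWithin : ℕ → Set α
  | 0 => F
  | n + 1 => reachesWithin n ∪ {a | ∃ b, R a b ∧ b ∈ reachesWithin n}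

variable {R F}

theorem exists_mem_reachesWithin {a b : α} (hab : ReflTransGen R a b) (hb : b ∈ F) :
    ∃ n, a ∈ reachesWithin R F n := by
  induction hab using ReflTransGen.head_induction_on with
  | refl => exact ⟨0, hb⟩
  | head hac _ ih =>
    obtain ⟨n, hn⟩ := ih
    exact ⟨n + 1, Or.inr ⟨_, hac, hn⟩⟩

theorem exists_rank_descent (h : ∀ a, ∃ b ∈ F, ReflTransGen R a b) :
    ∃ d : α → ℕ, ∀ a ∉ F, ∃ b, R a b ∧ d b < d a := by
  classical
  have hreach (a : α) : ∃ n, a ∈ reachesWithin R F n :=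
    let ⟨_, hb, hab⟩ := h a
    exists_mem_reachesWithin hab hb
  refine ⟨fun a => Nat.find (hreach a), fun a ha => ?_⟩
  obtain ⟨n, hn⟩ : ∃ n, Nat.find (hreach a) = n + 1 :=
    Nat.exists_eq_succ_of_ne_zero fun h0 => ha <| by
      simpa only [h0, reachesWithin] using Nat.find_spec (hreach a)
  have hmem := Nat.find_spec (hreach a)
  rw [hn] at hmem
  rcases hmem with hlow | ⟨b, hab, hb⟩
  · exact absurd hlow (Nat.find_min (hreach a) (by omega))
  · refine ⟨b, hab, ?_⟩
    show Nat.find (hreach b) < Nat.find (hreach a)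
    exact hn ▸ Nat.lt_succ_of_le (Nat.find_min' (hreach b) hb)

end Relation

section Frame

variable {V E : Type*} (s r : E → V)

def frame : Set V := ⋃₀ {W | MinHereditary s r W}

theorem hereditary_descendants (v : V) : Hereditary s r {w | Descendant s r v w} :=
  ⟨⟨v, .refl⟩, fun _ hu _ huw => hu.trans huw⟩

variable {s r}

theorem Hereditary.exists_minHereditary_subset [Finite V] {W : Set V} (hW : Hereditary s r W) :
    ∃ U ⊆ W, MinHereditary s r U := by
  obtain ⟨U, hUW, hU⟩ := exists_minimal_le_of_wellFoundedLT (Hereditary s r) W hW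
  exact ⟨U, hUW, hU.prop, fun _ hU' hU'U => hU.eq_of_le hU' hU'U⟩

variable (s r)

theorem exists_descendant_mem_frame [Finite V] (v : V) :
    ∃ w ∈ frame s r, Descendant s r v w := by
  obtain ⟨U, hUv, hU⟩ := (hereditary_descendants s r v).exists_minHereditary_subset
  obtain ⟨w, hw⟩ := hU.1.1
  exact ⟨w, ⟨U, hU, hw⟩, hUv hw⟩

theorem exists_rank_specialization_descending [Finite V] :
    ∃ (d : V → ℕ) (γ : {u : V // ∃ e, s e = u} → E),
      (∀ u, s (γ u) = u.1) ∧ ∀ u, u.1 ∉ frame s r → d (r (γ u)) < d u.1 := by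
  obtain ⟨d, hd⟩ := Relation.exists_rank_descent (exists_descendant_mem_frame s r)
  have hedge (u : {u : V // ∃ e, s e = u}) :
      ∃ e, s e = u.1 ∧ (u.1 ∉ frame s r → d (r e) < d u.1) := by
    obtain ⟨u, e, he⟩ := u
    by_cases hu : u ∈ frame s r
    · exact ⟨e, he, absurd hu⟩
    · obtain ⟨_, ⟨e', he', rfl⟩, hlt⟩ := hd u hu
      exact ⟨e', he', fun _ => hlt⟩
  choose γ hγs hγd using hedge
  exact ⟨d, γ, hγs, hγd⟩

variable {s r}

theorem nodup_of_isChain_of_rank_lt (d : V → ℕ) {p : List E}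
    (hp : p.IsChain fun e f => r e = s f) (hd : ∀ e ∈ p, d (r e) < d (s e)) : p.Nodup := by
  have hdesc : (p.map (d ∘ s)).IsChain (· > ·) :=
    (List.isChain_map _).2 <| hp.imp_of_mem_imp fun e f he _ (hef : r e = s f) =>
      show d (s f) < d (s e) from hef ▸ hd e he
  exact List.Nodup.of_map _ (hdesc.pairwise.imp ne_of_gt)

end Frame

theorem exists_specialization_finite_special_paths_outside_frame_general
    {V E : Type*} [Fintype V] [Fintype E]
    (s r : E → V) :
    ∃ γ : {u : V // ∃ e, s e = u} → E,
      (∀ u, s (γ u) = u.1) ∧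
      {p : List E | p ≠ [] ∧ p.Chain' (fun e f => r e = s f) ∧
        (∀ e ∈ p, ∃ u, γ u = e) ∧
        ∀ e ∈ p, ∀ W : Set V, MinHereditary s r W → s e ∉ W}.Finite := by
  obtain ⟨d, γ, hγs, hγd⟩ := exists_rank_specialization_descending s r
  refine ⟨γ, hγs, (List.finite_length_le E (Fintype.card E)).subset ?_⟩
  rintro p ⟨-, hchain, hspecial, hout⟩
  refine (nodup_of_isChain_of_rank_lt d hchain fun e he => ?_).length_le_card
  obtain ⟨u, rfl⟩ := hspecial e he
  have hu : u.1 ∉ frame s r := fun ⟨W, hW, huW⟩ => hout _ he W hW (by rwa [hγs])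
  simpa only [hγs] using hγd u hu

/-- Let `(V, E, s, r)` be a finite directed graph with `V` nonempty and frame
`W₁, …, W_k` (the collection of all minimal hereditary subsets). Then there is a
specialization `γ` (a map from non-sink vertices to edges with `s (γ v) = v`) such that
the set of special paths `p = e₁⋯eₙ` (all edges in the image of `γ`) with
`s e₁, …, s eₙ ∉ W₁ ∪ ⋯ ∪ W_k` is finite. -/
theorem exists_specialization_finite_special_paths_outside_frame
    {V E : Type*} [Fintype V] [Fintype E] [Nonempty V]
    (s r : E → V) :
    ∃ γ : {u : V // ∃ e, s e = u} → E,
      (∀ u, s (γ u) = u.1) ∧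
      {p : List E | p ≠ [] ∧ p.Chain' (fun e f => r e = s f) ∧
        (∀ e ∈ p, ∃ u, γ u = e) ∧
        ∀ e ∈ p, ∀ W : Set V, MinHereditary s r W → s e ∉ W}.Finite :=
  exists_specialization_finite_special_paths_outside_frame_general s r
end

section
/- Let Γ = (V, E, s, r) be a finite directed graph and let W ⊆ V be a nonempty hereditary subset. Then (W^⊥)^⊥ is the largest hereditary subset of V all of whose vertices have a descendant in W; that is: every vertex of (W^⊥)^⊥ has a descendant in W, (W^⊥)^⊥ is hereditary, and every hereditary subset U ⊆ V such that every vertex of U has a descendant in W satisfies U ⊆ (W^⊥)^⊥. -/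
/-- `perp s r X = X^⊥` is the set of vertices having no descendant in `X`. -/
def perp {V E : Type*} (s r : E → V) (X : Set V) : Set V :=
  {v | ∀ w, Descendant s r v w → w ∉ X}

/-- Let `W ⊆ V` be a nonempty hereditary subset of a finite directed graph.
Then `(W^⊥)^⊥` is the largest hereditary subset of `V` all of whose vertices have a
descendant in `W`: every vertex of `(W^⊥)^⊥` has a descendant in `W`, `(W^⊥)^⊥` is
hereditary, and every (nonempty) hereditary subset `U ⊆ V` all of whose vertices have a
descendant in `W` satisfies `U ⊆ perp s r (perp s r W)`. -/
theorem perp_perp_largest_hereditary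
    {V E : Type*} [Fintype V] [Fintype E]
    (s r : E → V) (W : Set V) (hW : Hereditary s r W) :
    (∀ v ∈ perp s r (perp s r W), ∃ w ∈ W, Descendant s r v w) ∧
    Hereditary s r (perp s r (perp s r W)) ∧
    (∀ U : Set V, Hereditary s r U → (∀ u ∈ U, ∃ w ∈ W, Descendant s r u w) →
      U ⊆ perp s r (perp s r W)) := by
  obtain ⟨⟨w0, hw0⟩, hher⟩ := hW
  have h1 : ∀ v ∈ perp s r (perp s r W), ∃ w ∈ W, Descendant s r v w := by
    intro v hv
    have := hv v Relation.ReflTransGen.refl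
    simp only [perp, Set.mem_setOf_eq, not_forall, not_not] at this
    obtain ⟨w, hd, hw⟩ := this
    exact ⟨w, hw, hd⟩
  refine ⟨h1, ⟨⟨w0, ?_⟩, ?_⟩, ?_⟩
  · intro x hx hxp
    exact hxp x Relation.ReflTransGen.refl (hher w0 hw0 x hx)
  · intro v hv w hvw x hwx
    exact hv x (hvw.trans hwx)
  · intro U hU hUW u hu x hux hx
    have hxU : x ∈ U := hU.2 u hu x hux
    obtain ⟨w, hwW, hxw⟩ := hUW x hxU
    exact hx w hxw hwW
end

section
/- Let Γ = (V, E, s, r) be a finite directed graph with a specialization γ. Two vertices v, w ∈ V are connected in the undirected graph (V, γ̃(V)) if and only if they have a common special descendant in Γ. -/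
/-!
Every vertex is the source of at most one special edge, so the special-edge relation is
deterministic and the special descendants of a vertex form a single chain. Hence having a
common special descendant is transitive, so it is an equivalence relation; it contains the
special edges and is contained in the equivalence they generate, which is connectivity
in `(V, γ̃(V))`.
-/

namespace Relation

variable {α : Type*} {r : α → α → Prop}

theorem equivalence_join_reflTransGen_of_rightUnique (hr : Relator.RightUnique r) :
    Equivalence (Join (ReflTransGen r)) :=
  equivalence_join_reflTransGen fun _ b _ hab hac ↦ ⟨b, .refl, hr hab hac ▸ .refl⟩

theorem eqvGen_eq_join_reflTransGen (hr : Relator.RightUnique r) :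
    EqvGen r = Join (ReflTransGen r) := by
  have : IsEquiv α (Join (ReflTransGen r)) :=
    (equivalence_join_reflTransGen_of_rightUnique hr).isEquiv
  exact le_antisymm (EqvGen.eqvGen_le fun _ b hab ↦ ⟨b, .single hab, .refl⟩)
    (join_le_of_equivalence_of_le (EqvGen.is_equivalence r) (EqvGen.reflTransGen_le_eqvGen r))

end Relation

section SpecialEdges

variable {V E : Type*} (s r : E → V) (γ : {v : V // ∃ e, s e = v} → E)

def SpecialStep (a b : V) : Prop :=
  ∃ e, (∃ x, γ x = e) ∧ s e = a ∧ r e = b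

theorem rightUnique_specialStep (hγ : ∀ v, s (γ v) = v.1) :
    Relator.RightUnique (SpecialStep s r γ) := by
  rintro a b c ⟨_, ⟨x, rfl⟩, hxa, rfl⟩ ⟨_, ⟨y, rfl⟩, hya, rfl⟩
  have hxy : x = y := Subtype.ext <| (hγ x).symm.trans <| hxa.trans <| hya.symm.trans (hγ y)
  rw [hxy]

theorem symmGen_specialStep :
    Relation.SymmGen (SpecialStep s r γ) =
      fun a b ↦ ∃ e, (∃ u, γ u = e) ∧ ((s e = a ∧ r e = b) ∨ (s e = b ∧ r e = a)) := by
  ext a b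
  simp only [Relation.SymmGen, SpecialStep, and_or_left, exists_or]

end SpecialEdges

theorem connected_iff_common_special_descendant_general
    {V E : Type*}
    (s r : E → V)
    (γ : {v : V // ∃ e, s e = v} → E)
    (hγ : ∀ v, s (γ v) = v.1)
    (v w : V) :
    Relation.ReflTransGen
        (fun a b => ∃ e, (∃ u, γ u = e) ∧ ((s e = a ∧ r e = b) ∨ (s e = b ∧ r e = a)))
        v w ↔
      ∃ u : V,
        Relation.ReflTransGen (fun a b => ∃ e, (∃ x, γ x = e) ∧ s e = a ∧ r e = b) v u ∧
        Relation.ReflTransGen (fun a b => ∃ e, (∃ x, γ x = e) ∧ s e = a ∧ r e = b) w u := by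
  rw [← symmGen_specialStep, Relation.EqvGen.reflTransGen_symmGen,
    Relation.eqvGen_eq_join_reflTransGen (rightUnique_specialStep s r γ hγ)]
  rfl

/-- Let `(V, E, s, r)` be a finite directed graph with a specialization `γ`
(a map from non-sink vertices to edges with `s (γ v) = v`; special edges are those in the
image of `γ`). Two vertices `v, w ∈ V` are connected in the undirected graph
`(V, γ̃(V))` (whose edges are the special edges with directions forgotten) if and only if
they have a common special descendant in the graph, i.e. a vertex reachable from each of
`v` and `w` by a special path or a path of length `0`. -/
theorem connected_iff_common_special_descendant
    {V E : Type*} [Fintype V] [Fintype E]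
    (s r : E → V)
    (γ : {v : V // ∃ e, s e = v} → E)
    (hγ : ∀ v, s (γ v) = v.1)
    (v w : V) :
    Relation.ReflTransGen
        (fun a b => ∃ e, (∃ u, γ u = e) ∧ ((s e = a ∧ r e = b) ∨ (s e = b ∧ r e = a)))
        v w ↔
      ∃ u : V,
        Relation.ReflTransGen (fun a b => ∃ e, (∃ x, γ x = e) ∧ s e = a ∧ r e = b) v u ∧
        Relation.ReflTransGen (fun a b => ∃ e, (∃ x, γ x = e) ∧ s e = a ∧ r e = b) w u :=
  connected_iff_common_special_descendant_general s r γ hγ v w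
end

section
/- Let G be a complete Hausdorff topological abelian group, ι an index set, and f : ι → G a summable family whose sum a is nonzero. Then there exists a nonempty subset Ω' ⊆ ι such that the restriction of f to Ω' is summable with sum a, and this sum is reduced: for every nonempty subset S ⊆ Ω', the subsum ∑_{i∈S} f(i) (which converges, since subfamilies of a summable family in a complete group are summable) is nonzero. -/
/-!
Zero-sum subsets of `ι` are closed under unions of chains: a finite set outside of which all
subsums are small meets the union of a chain inside a single member of the chain. By Zorn's lemma
there is a maximal zero-sum subset `M`. Its complement carries the whole sum `a`, so it is
nonempty, and a nonempty zero-sum subset of it could be added to `M`, contradicting maximality.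
-/

open Set

section

variable {G : Type*} [AddCommGroup G] [UniformSpace G] [IsUniformAddGroup G]
  [T2Space G] [CompleteSpace G] {ι : Type*} {f : ι → G}

theorem Summable.tsum_sUnion_eq_zero_of_directedOn (hf : Summable f) {c : Set (Set ι)}
    (hc : DirectedOn (· ⊆ ·) c) (hzero : ∀ s ∈ c, ∑' i : s, f i = 0) :
    ∑' i : ⋃₀ c, f i = 0 := by
  rcases c.eq_empty_or_nonempty with rfl | hne
  · simp
  refine pure_le_nhds_iff.1 fun e he => ?_
  obtain ⟨s, hs⟩ := hf.tsum_vanishing he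
  obtain ⟨m, hmc, hm⟩ := hc.exists_mem_subset_of_finite_of_subset_sUnion hne
    (s.finite_toSet.subset inter_subset_left) (inter_subset_right (s := (s : Set ι)))
  have hmS : m ⊆ ⋃₀ c := subset_sUnion_of_mem hmc
  have hdisj : Disjoint (⋃₀ c \ m) s :=
    disjoint_left.2 fun i hi his => hi.2 (hm ⟨his, hi.1⟩)
  have hsplit : ∑' i : ⋃₀ c, f i = ∑' i : ↑(⋃₀ c \ m), f i := by
    conv_lhs => rw [← union_sdiff_cancel hmS]
    rw [hf.subtype _ |>.tsum_union_disjoint disjoint_sdiff_right (hf.subtype _), hzero m hmc,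
      zero_add]
  rw [hsplit]
  exact hs _ hdisj

theorem Summable.exists_maximal_tsum_eq_zero (hf : Summable f) :
    ∃ M : Set ι, Maximal (fun s : Set ι => ∑' i : s, f i = 0) M :=
  zorn_subset _ fun c hcS hc =>
    ⟨⋃₀ c, hf.tsum_sUnion_eq_zero_of_directedOn hc.directedOn hcS,
      fun _ => subset_sUnion_of_mem⟩

end

/-- Let `G` be a complete Hausdorff topological abelian group, `ι` an index
set, and `f : ι → G` a summable family with nonzero sum `a`. Then there is a nonempty
subset `Ω' ⊆ ι` such that the restriction of `f` to `Ω'` sums to `a` and this sum is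
reduced: for every nonempty subset `S ⊆ Ω'`, the subsum `∑_{i ∈ S} f i` (which converges,
since subfamilies of summable families in complete groups are summable) is nonzero. -/
theorem exists_reduced_subsum
    {G : Type*} [AddCommGroup G] [UniformSpace G] [IsUniformAddGroup G]
    [T2Space G] [CompleteSpace G]
    {ι : Type*} (f : ι → G) (a : G)
    (hf : HasSum f a) (ha : a ≠ 0) :
    ∃ Ω' : Set ι, Ω'.Nonempty ∧
      HasSum (fun i : Ω' => f i) a ∧
      ∀ S : Set ι, S ⊆ Ω' → S.Nonempty → ∑' i : S, f i ≠ 0 := by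
  obtain ⟨M, hM⟩ := hf.summable.exists_maximal_tsum_eq_zero
  have hMc : ∑' i : ↑Mᶜ, f i = a := by
    rw [← hf.tsum_eq, ← hf.summable.tsum_subtype_add_tsum_subtype_compl M, hM.prop, zero_add]
  refine ⟨Mᶜ, ?_, hMc ▸ (hf.summable.subtype _).hasSum, fun S hSM hSne hS => ?_⟩
  · refine nonempty_iff_ne_empty.2 fun hempty => ha ?_
    simpa [hempty] using hMc.symm
  · have hMS : ∑' i : ↑(M ∪ S), f i = 0 := by
      rw [(hf.summable.subtype _).tsum_union_disjoint (subset_compl_iff_disjoint_left.1 hSM)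
        (hf.summable.subtype _), hM.prop, hS, add_zero]
    obtain ⟨i, hi⟩ := hSne
    exact hSM hi (hM.2 hMS subset_union_left (mem_union_right M hi))
end
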